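/- Let m ≥ 2. Let U be a complex Hadamard matrix of order 4m−1 obtained from the incidence matrix of a symmetric 2-(4m−1, 2m−1, m−1) design by replacing every 0 entry with a = −1 + 1/(2m) + ε·i·√(4m−1)/(2m) for some ε ∈ {1,−1}, and let V be a complex Hadamard matrix of order 4m−1 obtained from a normalized symmetric real Hadamard matrix H of order 4m by discarding the first row and column, replacing the off-diagonal −1s with b = −1 + 1/(2m−2) + δ·i·√(4m−5)/(2m−2) for some δ ∈ {1,−1}, replacing the diagonal 1s with −b, and leaving all other entries unchanged. Then U and V are not equivalent. -/

import Mathlib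

/-!
Haagerup's invariant, the set of products `M i j * star (M k j) * M k l * star (M i l)`, is
unchanged under equivalence: the unimodular diagonal factors cancel and the permutations only
relabel indices. All entries of `U` lie in `{1, a}` with `|a| = 1`, so its products are `a ^ k`
with `|k| ≤ 2`, of real part `1`, `Re a` or `2 (Re a)² - 1`. In `V`, two indices chosen according
to the diagonal of the core of `H` give a product `b ^ l` with `l ∈ {±1, ±2}`, of real part `Re b`
or `2 (Re b)² - 1`; this uses that every row of the core has entries of both signs off the
diagonal, by orthogonality to the all-ones first row. Since
`-1 < Re a = -1 + 1/(2m) < Re b = -1 + 1/(2m-2) ≤ -1/2`, these real parts never agree.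
-/

open Matrix

/-- Equivalence of complex Hadamard matrices: `H = P₁ D₁ K D₂ P₂` with permutation
matrices `P₁, P₂` and unitary diagonal matrices `D₁, D₂`. -/
def HadEquiv {n : Type*} [Fintype n] [DecidableEq n] (H K : Matrix n n ℂ) : Prop :=
  ∃ (σ τ : Equiv.Perm n) (d₁ d₂ : n → ℂ),
    (∀ i, ‖d₁ i‖ = 1) ∧ (∀ i, ‖d₂ i‖ = 1) ∧
    H = σ.permMatrix ℂ * Matrix.diagonal d₁ * K * Matrix.diagonal d₂ * τ.permMatrix ℂ

/-- `B` is the incidence matrix (over `ℂ`, with `0`/`1` entries) of a symmetric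
`2-(v,k,λ)` design. -/
def IsIncidence (v k lam : ℕ) (B : Matrix (Fin v) (Fin v) ℂ) : Prop :=
  (∀ i j, B i j = 0 ∨ B i j = 1) ∧
    (∀ i, ∑ j, B i j = (k : ℂ)) ∧ (∀ j, ∑ i, B i j = (k : ℂ)) ∧
    B * B.transpose = ((k : ℂ) - (lam : ℂ)) • 1 + (lam : ℂ) • Matrix.of (fun _ _ => (1 : ℂ))

/-- `H` is a real Hadamard matrix of order `n`: `±1` entries with `H Hᵀ = n I`. -/
def IsRealHadamard {n : ℕ} (H : Matrix (Fin n) (Fin n) ℝ) : Prop :=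
  (∀ i j, H i j = 1 ∨ H i j = -1) ∧ H * H.transpose = (n : ℝ) • 1

/-- A real Hadamard matrix is normalized if its first row and column consist of `1`s. -/
def IsNormalizedRH {n : ℕ} [NeZero n] (H : Matrix (Fin n) (Fin n) ℝ) : Prop :=
  (∀ j, H 0 j = 1) ∧ (∀ i, H i 0 = 1)

lemma permMatrix_mul_diagonal_mul_mul_diagonal_mul_permMatrix_apply {n R : Type*} [Fintype n]
    [DecidableEq n] [Semiring R] (σ τ : Equiv.Perm n) (d₁ d₂ : n → R) (K : Matrix n n R)
    (i j : n) :
    (σ.permMatrix R * diagonal d₁ * K * diagonal d₂ * τ.permMatrix R) i j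
      = d₁ (σ i) * K (σ i) (τ.symm j) * d₂ (τ.symm j) := by
  simp only [Matrix.mul_assoc, Equiv.Perm.permMatrix, PEquiv.toMatrix_toPEquiv_mul]
  simp [PEquiv.mul_toMatrix_toPEquiv, Matrix.mul_apply, diagonal_apply, mul_assoc]

def haagerupProd {n : Type*} (M : Matrix n n ℂ) (i j k l : n) : ℂ :=
  M i j * star (M k j) * M k l * star (M i l)

lemma HadEquiv.exists_haagerupProd_eq {n : Type*} [Fintype n] [DecidableEq n]
    {H K : Matrix n n ℂ} (hE : HadEquiv H K) (i j k l : n) :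
    ∃ i' j' k' l', haagerupProd K i j k l = haagerupProd H i' j' k' l' := by
  obtain ⟨σ, τ, d₁, d₂, hd₁, hd₂, rfl⟩ := hE
  have hunit : ∀ z : ℂ, ‖z‖ = 1 → z * star z = 1 := fun z hz => by
    rw [Complex.star_def, Complex.mul_conj', hz]; norm_num
  refine ⟨σ.symm i, τ j, σ.symm k, τ l, ?_⟩
  simp only [haagerupProd, permMatrix_mul_diagonal_mul_mul_diagonal_mul_permMatrix_apply,
    Equiv.apply_symm_apply, Equiv.symm_apply_apply, star_mul']
  calc haagerupProd K i j k l
      = (d₁ i * star (d₁ i)) * (d₁ k * star (d₁ k)) * (d₂ j * star (d₂ j))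
          * (d₂ l * star (d₂ l)) * haagerupProd K i j k l := by
        rw [hunit _ (hd₁ i), hunit _ (hd₁ k), hunit _ (hd₂ j), hunit _ (hd₂ l)]; ring
    _ = _ := by unfold haagerupProd; ring

lemma Complex.star_zpow_of_norm_eq_one {a : ℂ} (ha : ‖a‖ = 1) (e : ℤ) :
    star (a ^ e) = a ^ (-e) := by
  rw [_root_.zpow_neg, star_zpow₀, ← _root_.inv_zpow, Complex.inv_eq_conj ha]
  rfl

lemma exists_haagerupProd_eq_zpow {n : Type*} {M : Matrix n n ℂ} {a : ℂ} (ha : ‖a‖ = 1)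
    (hM : ∀ i j, M i j = 1 ∨ M i j = a) (i j k l : n) :
    ∃ e : ℤ, |e| ≤ 2 ∧ haagerupProd M i j k l = a ^ e := by
  have ha0 : a ≠ 0 := by rintro rfl; simp at ha
  have hM' : ∀ i j, ∃ p : ℤ, 0 ≤ p ∧ p ≤ 1 ∧ M i j = a ^ p := fun i j => by
    rcases hM i j with h | h
    · exact ⟨0, le_rfl, zero_le_one, by simp [h]⟩
    · exact ⟨1, zero_le_one, le_rfl, by simp [h]⟩
  obtain ⟨p₁, h₁, h₁', e₁⟩ := hM' i j
  obtain ⟨p₂, h₂, h₂', e₂⟩ := hM' k j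
  obtain ⟨p₃, h₃, h₃', e₃⟩ := hM' k l
  obtain ⟨p₄, h₄, h₄', e₄⟩ := hM' i l
  refine ⟨p₁ - p₂ + p₃ - p₄, abs_le.2 ⟨by omega, by omega⟩, ?_⟩
  simp only [haagerupProd, e₁, e₂, e₃, e₄, Complex.star_zpow_of_norm_eq_one ha,
    zpow_sub₀ ha0, zpow_add₀ ha0, _root_.zpow_neg]
  ring

lemma Complex.re_sq_of_norm_eq_one {z : ℂ} (hz : ‖z‖ = 1) : (z ^ 2).re = 2 * z.re ^ 2 - 1 := by
  have : z.re ^ 2 + z.im ^ 2 = 1 := by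
    rw [← Complex.normSq_add_mul_I, Complex.re_add_im, Complex.normSq_eq_norm_sq, hz, one_pow]
  rw [pow_two, Complex.mul_re]
  linear_combination -this

lemma Complex.re_zpow_eq_re_pow_natAbs {z : ℂ} (hz : ‖z‖ = 1) (e : ℤ) :
    (z ^ e).re = (z ^ e.natAbs).re := by
  obtain ⟨n, rfl | rfl⟩ := Int.eq_nat_or_neg e
  · rw [Int.natAbs_natCast, zpow_natCast]
  · rw [Int.natAbs_neg, Int.natAbs_natCast, ← Complex.star_zpow_of_norm_eq_one hz, zpow_natCast]
    rfl

lemma re_pow_ne_re_pow {a b : ℂ} (ha : ‖a‖ = 1) (hb : ‖b‖ = 1) (ha₁ : -1 < a.re)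
    (ha₂ : a.re ≤ -3 / 4) (hab : a.re < b.re) (hb₂ : b.re ≤ -1 / 2) {k l : ℕ} (hk : k ≤ 2)
    (hl₁ : 1 ≤ l) (hl₂ : l ≤ 2) : (a ^ k).re ≠ (b ^ l).re := by
  interval_cases k <;> interval_cases l <;>
    simp only [pow_zero, pow_one, Complex.one_re, Complex.re_sq_of_norm_eq_one ha,
      Complex.re_sq_of_norm_eq_one hb] <;>
    nlinarith

lemma zpow_ne_zpow_of_re_eq {a b : ℂ} (ha : ‖a‖ = 1) (hb : ‖b‖ = 1) {t u : ℝ}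
    (hare : a.re = -1 + 1 / t) (hbre : b.re = -1 + 1 / u) (ht : 4 ≤ t) (hu : 2 ≤ u) (hut : u < t)
    {k l : ℤ} (hk : |k| ≤ 2) (hl₀ : l ≠ 0) (hl : |l| ≤ 2) : a ^ k ≠ b ^ l := by
  intro h
  rw [Int.abs_eq_natAbs] at hk hl
  refine re_pow_ne_re_pow ha hb ?_ ?_ ?_ ?_ (k := k.natAbs) (l := l.natAbs) (by omega)
    (by omega) (by omega) ?_
  · rw [hare]; linarith [one_div_pos.2 (by linarith : 0 < t)]
  · rw [hare]; linarith [one_div_le_one_div_of_le (by norm_num : (0 : ℝ) < 4) ht]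
  · rw [hare, hbre]; linarith [one_div_lt_one_div_of_lt (by linarith : 0 < u) hut]
  · rw [hbre]; linarith [one_div_le_one_div_of_le (by norm_num : (0 : ℝ) < 2) hu]
  · rw [← Complex.re_zpow_eq_re_pow_natAbs ha, ← Complex.re_zpow_eq_re_pow_natAbs hb, h]

lemma norm_eq_one_and_re_eq {z : ℂ} {t s ε : ℝ} (ht : t ≠ 0) (hs : s ^ 2 = 2 * t - 1)
    (hε : ε ^ 2 = 1) (hz : z = -1 + 1 / t + ε * Complex.I * s / t) :
    ‖z‖ = 1 ∧ z.re = -1 + 1 / t := by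
  have hz' : z = ((-1 + 1 / t : ℝ) : ℂ) + ((ε * s / t : ℝ) : ℂ) * Complex.I := by
    rw [hz]; push_cast; ring
  refine ⟨?_, by simp [hz']⟩
  have hsq : ‖z‖ ^ 2 = 1 := by
    rw [← Complex.normSq_eq_norm_sq, hz', Complex.normSq_add_mul_I]
    field_simp
    linear_combination s ^ 2 * hε + hs
  exact (pow_eq_one_iff_of_nonneg (norm_nonneg z) two_ne_zero).1 hsq

section Core

variable {ι : Type*} [DecidableEq ι]

noncomputable def coreMatrix (G : Matrix ι ι ℝ) (b : ℂ) : Matrix ι ι ℂ :=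
  of fun i j => if i = j then (if G i i = 1 then -b else -1) else (if G i j = 1 then 1 else b)

lemma haagerupProd_coreMatrix {G : Matrix ι ι ℝ} (hG : Gᵀ = G) {b : ℂ} (hb : ‖b‖ = 1)
    {i k : ι} (hik : i ≠ k) :
    haagerupProd (coreMatrix G b) i i k k
      = b ^ ((if G i i = 1 then 1 else 0) + (if G k k = 1 then 1 else 0)
          - 2 * (if G i k = 1 then 0 else 1) : ℤ) := by
  have hb0 : b ≠ 0 := by rintro rfl; simp at hb
  have hstar : star b = b⁻¹ := (Complex.inv_eq_conj hb).symm
  have hki : G k i = G i k := by rw [← hG, transpose_apply, hG]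
  simp only [haagerupProd, coreMatrix, of_apply, if_neg hik, if_neg hik.symm, hki]
  split_ifs <;> simp [hstar] <;> field_simp

lemma exists_haagerupProd_coreMatrix_eq_zpow [Nonempty ι] {G : Matrix ι ι ℝ}
    (hG : ∀ i j, G i j = 1 ∨ G i j = -1) (hsym : Gᵀ = G)
    (hrow : ∀ i (v : ℝ), (v = 1 ∨ v = -1) → ∃ j, j ≠ i ∧ G i j = v) {b : ℂ} (hb : ‖b‖ = 1) :
    ∃ (i k : ι) (e : ℤ), e ≠ 0 ∧ |e| ≤ 2 ∧ haagerupProd (coreMatrix G b) i i k k = b ^ e := by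
  suffices h : ∃ i k, i ≠ k ∧ ((if G i i = 1 then 1 else 0) + (if G k k = 1 then 1 else 0)
      - 2 * (if G i k = 1 then 0 else 1) : ℤ) ≠ 0 by
    obtain ⟨i, k, hik, he⟩ := h
    exact ⟨i, k, _, he, by split_ifs <;> norm_num, haagerupProd_coreMatrix hsym hb hik⟩
  -- A mixed diagonal gives the exponent `±1`; on a constant diagonal `s`, an off-diagonal `s`
  -- in the same row gives `±2`.
  by_cases hmix : ∃ i k, G i i = 1 ∧ G k k ≠ 1
  · obtain ⟨i, k, hi, hk⟩ := hmix
    refine ⟨i, k, fun h => hk (h ▸ hi), ?_⟩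
    rw [if_pos hi, if_neg hk]
    split_ifs <;> norm_num
  · push Not at hmix
    obtain ⟨i⟩ := ‹Nonempty ι›
    obtain ⟨k, hki, hik⟩ := hrow i (G i i) (hG i i)
    refine ⟨i, k, hki.symm, ?_⟩
    by_cases hi : G i i = 1
    · rw [if_pos hi, if_pos (hmix i k hi), if_pos (hik.trans hi)]
      norm_num
    · have hk : G k k ≠ 1 := fun hk => hi (hmix k i hk)
      rw [if_neg hi, if_neg hk, if_neg (hik ▸ hi)]
      norm_num

end Core

lemma IsRealHadamard.sum_row_eq_zero {n : ℕ} [NeZero n] {H : Matrix (Fin n) (Fin n) ℝ}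
    (hH : IsRealHadamard H) (hnorm : IsNormalizedRH H) {r : Fin n} (hr : r ≠ 0) :
    ∑ c, H r c = 0 := by
  have h := congrFun (congrFun hH.2 r) 0
  simpa [Matrix.mul_apply, hnorm.1, hr] using h

lemma IsRealHadamard.exists_ne_apply_eq {n : ℕ} [NeZero n] (hn : 4 < n)
    {H : Matrix (Fin n) (Fin n) ℝ} (hH : IsRealHadamard H) (hnorm : IsNormalizedRH H)
    {r : Fin n} (hr : r ≠ 0) {v : ℝ} (hv : v = 1 ∨ v = -1) :
    ∃ c, c ≠ 0 ∧ c ≠ r ∧ H r c = v := by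
  by_contra! hcon
  set S := (Finset.univ.erase (0 : Fin n)).erase r
  have hS : ∑ c ∈ S, H r c = S.card * -v := by
    rw [Finset.sum_congr rfl fun c hc => ?_, Finset.sum_const, nsmul_eq_mul]
    obtain ⟨hcr, hc0⟩ : c ≠ r ∧ c ≠ 0 := by simpa [S] using hc
    rcases hH.1 r c with h | h <;> rcases hv with rfl | rfl <;> simp_all
  have hcard : (S.card : ℝ) + 2 = n := by
    have : S.card + 1 + 1 = n := by
      rw [Finset.card_erase_add_one (by simpa using hr), Finset.card_erase_add_one
        (Finset.mem_univ _), Finset.card_univ, Fintype.card_fin]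
    exact_mod_cast this
  have hsum : H r 0 + (H r r + ∑ c ∈ S, H r c) = 0 := by
    rw [Finset.add_sum_erase _ _ (by simpa using hr), Finset.add_sum_erase _ _
      (Finset.mem_univ _)]
    exact hH.sum_row_eq_zero hnorm hr
  have hn' : (4 : ℝ) < n := by exact_mod_cast hn
  rw [hnorm.2, hS] at hsum
  rcases hv with rfl | rfl <;> rcases hH.1 r r with h | h <;> rw [h] at hsum <;> nlinarith

lemma IsRealHadamard.exists_ne_core_apply_eq {k n : ℕ} [NeZero n] (hkn : k + 1 = n) (hn : 4 < n)
    {H : Matrix (Fin n) (Fin n) ℝ} (hH : IsRealHadamard H) (hnorm : IsNormalizedRH H)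
    {e : Fin k → Fin n} (he : ∀ i, e i = Fin.cast hkn i.succ) (i : Fin k) {v : ℝ}
    (hv : v = 1 ∨ v = -1) : ∃ j, j ≠ i ∧ H (e i) (e j) = v := by
  have he₀ : e i ≠ 0 := fun h => by
    have := congrArg Fin.val h
    rw [he, Fin.val_cast, Fin.val_succ, Fin.val_zero] at this
    omega
  obtain ⟨c, hc₀, hci, hcv⟩ := hH.exists_ne_apply_eq hn hnorm he₀ hv
  have hc₀' : Fin.cast hkn.symm c ≠ 0 := by
    rw [Ne, Fin.ext_iff, Fin.val_cast, Fin.val_zero]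
    exact fun h => hc₀ (Fin.ext (by rw [h, Fin.val_zero]))
  have hj : e ((Fin.cast hkn.symm c).pred hc₀') = c := by
    rw [he, Fin.succ_pred, Fin.cast_cast, Fin.cast_eq_self]
  exact ⟨_, fun h => hci (by rw [← hj, h]), hj ▸ hcv⟩

theorem stmt11 (m : ℕ) (hm : 2 ≤ m)
    -- the design-based matrix U
    (B : Matrix (Fin (4 * m - 1)) (Fin (4 * m - 1)) ℂ)
    (hB : IsIncidence (4 * m - 1) (2 * m - 1) (m - 1) B)
    (ε : ℝ) (hε : ε = 1 ∨ ε = -1)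
    (a : ℂ) (ha : a = -1 + 1 / (2 * m) + ε * Complex.I * Real.sqrt (4 * m - 1) / (2 * m))
    (U : Matrix (Fin (4 * m - 1)) (Fin (4 * m - 1)) ℂ)
    (hU : U = Matrix.of fun i j => if B i j = 0 then a else B i j)
    -- the matrix V obtained from a normalized symmetric real Hadamard matrix H
    (H : Matrix (Fin (4 * m)) (Fin (4 * m)) ℝ)
    (hHad : IsRealHadamard H)
    (hnorm : @IsNormalizedRH (4 * m) ⟨by omega⟩ H)
    (hsym : H.transpose = H)
    (δ : ℝ) (hδ : δ = 1 ∨ δ = -1)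
    (b : ℂ)
    (hb : b = -1 + 1 / (2 * m - 2) + δ * Complex.I * Real.sqrt (4 * m - 5) / (2 * m - 2))
    (e : Fin (4 * m - 1) → Fin (4 * m))
    (he : ∀ i, e i = Fin.cast (by omega : 4 * m - 1 + 1 = 4 * m) i.succ)
    (V : Matrix (Fin (4 * m - 1)) (Fin (4 * m - 1)) ℂ)
    (hV : V = Matrix.of fun i j =>
      if i = j then (if H (e i) (e i) = 1 then -b else -1)
      else (if H (e i) (e j) = 1 then 1 else b)) :
    ¬ HadEquiv U V := by
  intro hE
  have hM : (2 : ℝ) ≤ m := by exact_mod_cast hm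
  have hsq : ∀ x : ℝ, (x = 1 ∨ x = -1) → x ^ 2 = 1 := by rintro _ (rfl | rfl) <;> norm_num
  obtain ⟨ha₁, hare⟩ := norm_eq_one_and_re_eq (z := a) (t := 2 * m) (s := √(4 * m - 1))
    (by positivity) (by rw [Real.sq_sqrt (by linarith)]; ring) (hsq ε hε)
    (by rw [ha]; push_cast; ring)
  obtain ⟨hb₁, hbre⟩ := norm_eq_one_and_re_eq (z := b) (t := 2 * m - 2) (s := √(4 * m - 5))
    (by linarith) (by rw [Real.sq_sqrt (by linarith)]; ring) (hsq δ hδ)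
    (by rw [hb]; push_cast; ring)
  have hUa : ∀ i j, U i j = 1 ∨ U i j = a := fun i j => by
    rcases hB.1 i j with h | h <;> simp [hU, h]
  have : NeZero (4 * m) := ⟨by omega⟩
  have : Nonempty (Fin (4 * m - 1)) := ⟨⟨0, by omega⟩⟩
  obtain ⟨I, K, l, hl₀, hl, hVl⟩ := exists_haagerupProd_coreMatrix_eq_zpow (G := H.submatrix e e)
    (fun i j => hHad.1 (e i) (e j)) (by rw [transpose_submatrix, hsym])
    (fun i _ hv => hHad.exists_ne_core_apply_eq _ (by omega) hnorm he i hv) hb₁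
  obtain ⟨i', j', k', l', hUV⟩ := hE.exists_haagerupProd_eq I I K K
  obtain ⟨k, hk, hUk⟩ := exists_haagerupProd_eq_zpow ha₁ hUa i' j' k' l'
  refine zpow_ne_zpow_of_re_eq ha₁ hb₁ hare hbre (by linarith) (by linarith) (by linarith)
    hk hl₀ hl (hUk.symm.trans (hUV.symm.trans ?_))
  rw [hV]
  exact hVl
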